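/- Let E₁(m) denote the unique root in [π²/16, π²/4) of m·sin(2√E) + √E·cos(2√E) = 0. Then E₁(m) = π²/16 + m + O(m²) as m → 0; in particular E₁ is differentiable at 0 with E₁(0) = π²/16 and E₁'(0) = 1. -/

import Mathlib

set_option maxHeartbeats 1000000

open Real Filter Asymptotics

lemma E1_key (m E : ℝ) (hm0 : 0 ≤ m) (hm1 : m ≤ 1/4)
    (hlo : π^2/16 ≤ E) (hhi : E < π^2/4)
    (heq : m * Real.sin (2 * Real.sqrt E) + Real.sqrt E * Real.cos (2 * Real.sqrt E) = 0) :
    |E - (π^2/16 + m)| ≤ 8 * m^2 := by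
  have hπ3 : (3:ℝ) < π := Real.pi_gt_three
  have hπ4 : π < 3.15 := Real.pi_lt_d2
  have hE0 : (0:ℝ) ≤ E := le_trans (by positivity) hlo
  have hs2 : (Real.sqrt E)^2 = E := Real.sq_sqrt hE0
  have hslo : π/4 ≤ Real.sqrt E := by
    have h := Real.sqrt_le_sqrt hlo
    rwa [show π^2/16 = (π/4)^2 by ring, Real.sqrt_sq (by positivity)] at h
  have hshi : Real.sqrt E < π/2 := by
    have h : Real.sqrt E < Real.sqrt (π^2/4) := Real.sqrt_lt_sqrt hE0 hhi
    rwa [show π^2/4 = (π/2)^2 by ring, Real.sqrt_sq (by positivity)] at h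
  obtain ⟨t, ht⟩ : ∃ t : ℝ, t = 2 * Real.sqrt E - π/2 := ⟨_, rfl⟩
  have hseq : Real.sqrt E = π/4 + t/2 := by rw [ht]; ring
  have ht0 : 0 ≤ t := by rw [ht]; linarith
  have htπ : t < π/2 := by rw [ht]; linarith
  have h2s : 2 * Real.sqrt E = t + π/2 := by rw [ht]; ring
  rw [h2s, Real.sin_add_pi_div_two, Real.cos_add_pi_div_two, hseq] at heq
  have key : m * Real.cos t = (π/4 + t/2) * Real.sin t := by linarith
  have hcos1 : Real.cos t ≤ 1 := Real.cos_le_one t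
  have hcoslb : 1 - t^2/2 ≤ Real.cos t := Real.one_sub_sq_div_two_le_cos
  have hsinle : Real.sin t ≤ t := Real.sin_le ht0
  have hsinnn : 0 ≤ Real.sin t := Real.sin_nonneg_of_nonneg_of_le_pi ht0 (by linarith)
  have hcospos : 0 < Real.cos t := Real.cos_pos_of_mem_Ioo ⟨by linarith, htπ⟩
  have ht1 : t ≤ 1 := by
    by_contra h
    push_neg at h
    have hsin1 : (3:ℝ)/4 < Real.sin 1 := by
      have := Real.sin_gt_sub_cube (by norm_num : (0:ℝ) < 1)
      norm_num at this; linarith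
    have hmono : Real.sin 1 ≤ Real.sin t :=
      Real.sin_le_sin_of_le_of_le_pi_div_two (by linarith) htπ.le h.le
    have h1 : m * Real.cos t ≤ 1/4 := by nlinarith
    nlinarith
  have hsinlb : t - t^3/4 ≤ Real.sin t := by
    rcases eq_or_lt_of_le ht0 with h | h
    · simp [← h]
    · have := Real.sin_gt_sub_cube h; nlinarith [pow_nonneg ht0 3]
  -- t ≤ 2m
  have ht2m : t ≤ 2*m := by
    have h1 : 3*t/4 ≤ t - t^3/4 := by nlinarith
    have h2 : (π/4) * (3*t/4) ≤ (π/4 + t/2) * Real.sin t := by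
      nlinarith [mul_nonneg ht0 hsinnn,
        mul_nonneg (by linarith : (0:ℝ) ≤ π) (by linarith : (0:ℝ) ≤ Real.sin t - 3*t/4)]
    have h3 : m * Real.cos t ≤ m := by nlinarith [mul_le_mul_of_nonneg_left hcos1 hm0]
    linarith [mul_nonneg (show (0:ℝ) ≤ π - 3 by linarith) ht0]
  have ht2 : t^2 ≤ 4*m^2 := by nlinarith
  have ht3 : t^3 ≤ t^2 := by nlinarith
  -- final bound
  have hEeq : E - (π^2/16 + m) = (π/4)*t + t^2/4 - m := by
    rw [← hs2, hseq]; ring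
  rw [hEeq, abs_le]
  have hc2 : 1/2 ≤ Real.cos t := by nlinarith
  constructor
  · -- lower bound: -(8m²) ≤ D, i.e. m - (π/4)t - t²/4 ≤ 8m²
    have e2 : (m - ((π/4)*t + t^2/4)) * Real.cos t
        = (π/4)*(Real.sin t - t*Real.cos t) + (t/2)*(Real.sin t - (t/2)*Real.cos t) := by
      linear_combination key
    have hA2 : Real.sin t - t*Real.cos t ≤ t^3/2 := by
      have := mul_le_mul_of_nonneg_left hcoslb ht0
      nlinarith
    have hB2 : Real.sin t - (t/2)*Real.cos t ≤ t := by
      have : 0 ≤ (t/2) * Real.cos t := mul_nonneg (by linarith) hcospos.le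
      linarith
    have hup : (m - ((π/4)*t + t^2/4)) * Real.cos t ≤ π*t^3/8 + t^2/2 := by
      rw [e2]
      have h1 : (π/4)*(Real.sin t - t*Real.cos t) ≤ (π/4)*(t^3/2) :=
        mul_le_mul_of_nonneg_left hA2 (by linarith)
      have h2 : (t/2)*(Real.sin t - (t/2)*Real.cos t) ≤ (t/2)*t :=
        mul_le_mul_of_nonneg_left hB2 (by linarith)
      nlinarith
    rcases le_or_gt (m - ((π/4)*t + t^2/4)) 0 with h | h
    · nlinarith
    · have := mul_le_mul_of_nonneg_left hc2 h.le
      nlinarith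
  · -- upper bound: D ≤ 8m²
    have e1 : (((π/4)*t + t^2/4) - m) * Real.cos t
        = (π/4)*(t*Real.cos t - Real.sin t) + (t/2)*((t/2)*Real.cos t - Real.sin t) := by
      linear_combination -key
    have hA : t*Real.cos t - Real.sin t ≤ t^3/4 := by
      have := mul_le_mul_of_nonneg_left hcos1 ht0
      nlinarith
    have hB : (t/2)*Real.cos t - Real.sin t ≤ 0 := by
      have h1 : (t/2)*Real.cos t ≤ t/2 := by
        have := mul_le_mul_of_nonneg_left hcos1 (by linarith : (0:ℝ) ≤ t/2)
        linarith
      nlinarith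
    have hup : (((π/4)*t + t^2/4) - m) * Real.cos t ≤ π*t^3/16 := by
      rw [e1]
      have h1 : (π/4)*(t*Real.cos t - Real.sin t) ≤ (π/4)*(t^3/4) :=
        mul_le_mul_of_nonneg_left hA (by linarith)
      have h2 : (t/2)*((t/2)*Real.cos t - Real.sin t) ≤ 0 :=
        mul_nonpos_of_nonneg_of_nonpos (by linarith) hB
      nlinarith
    rcases le_or_gt (((π/4)*t + t^2/4) - m) 0 with h | h
    · nlinarith
    · have := mul_le_mul_of_nonneg_left hc2 h.le
      nlinarith

/-- Let `E₁(m)` be the unique root in `[π²/16, π²/4)` of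
`m·sin(2√E) + √E·cos(2√E) = 0`.  Then `E₁(m) = π²/16 + m + O(m²)` as `m → 0⁺`;
in particular `E₁` is differentiable at `0` (from the right) with `E₁(0) = π²/16`
and `E₁'(0) = 1`. -/
theorem E1_asymptotics_at_zero (E₁ : ℝ → ℝ)
    (hE₁ : ∀ m : ℝ, 0 ≤ m → E₁ m ∈ Set.Ico (π^2 / 16) (π^2 / 4) ∧
      m * Real.sin (2 * Real.sqrt (E₁ m)) +
        Real.sqrt (E₁ m) * Real.cos (2 * Real.sqrt (E₁ m)) = 0) :
    (fun m : ℝ => E₁ m - (π^2 / 16 + m)) =O[nhdsWithin 0 (Set.Ici 0)] (fun m : ℝ => m^2) ∧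
      E₁ 0 = π^2 / 16 ∧ HasDerivWithinAt E₁ 1 (Set.Ici 0) 0 := by
  have hbound : ∀ m : ℝ, 0 ≤ m → m ≤ 1/4 → |E₁ m - (π^2/16 + m)| ≤ 8 * m^2 := by
    intro m hm0 hm1
    obtain ⟨⟨hlo, hhi⟩, heq⟩ := hE₁ m hm0
    exact E1_key m (E₁ m) hm0 hm1 hlo hhi heq
  have h0 : E₁ 0 = π^2 / 16 := by
    have := hbound 0 le_rfl (by norm_num)
    rw [abs_le] at this
    have h1 := this.1; have h2 := this.2
    norm_num at h1 h2
    linarith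
  have hev : ∀ᶠ m in nhdsWithin (0:ℝ) (Set.Ici 0), 0 ≤ m ∧ m ≤ 1/4 := by
    have h1 : ∀ᶠ m in nhdsWithin (0:ℝ) (Set.Ici 0), m ∈ Set.Ici (0:ℝ) :=
      eventually_mem_nhdsWithin
    have h2 : ∀ᶠ m in nhdsWithin (0:ℝ) (Set.Ici 0), |m - 0| < 1/4 :=
      eventually_nhdsWithin_of_eventually_nhds (eventually_abs_sub_lt 0 (by norm_num))
    filter_upwards [h1, h2] with m hm hm'
    rw [sub_zero] at hm'
    exact ⟨hm, le_of_lt (lt_of_abs_lt hm')⟩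
  have hO : (fun m : ℝ => E₁ m - (π^2 / 16 + m)) =O[nhdsWithin 0 (Set.Ici 0)]
      (fun m : ℝ => m^2) := by
    rw [isBigO_iff]
    refine ⟨8, ?_⟩
    filter_upwards [hev] with m hm
    rw [Real.norm_eq_abs, Real.norm_eq_abs, abs_of_nonneg (sq_nonneg m)]
    exact hbound m hm.1 hm.2
  refine ⟨hO, h0, ?_⟩
  rw [hasDerivWithinAt_iff_isLittleO]
  have hsq : (fun m : ℝ => m^2) =o[nhdsWithin (0:ℝ) (Set.Ici 0)] fun m => m - 0 := by
    rw [isLittleO_iff]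
    intro c hc
    have h2 : ∀ᶠ m in nhdsWithin (0:ℝ) (Set.Ici 0), |m - 0| < c :=
      eventually_nhdsWithin_of_eventually_nhds (eventually_abs_sub_lt 0 hc)
    filter_upwards [h2] with m hm
    rw [sub_zero] at hm ⊢
    rw [Real.norm_eq_abs, Real.norm_eq_abs, sq, abs_mul]
    exact mul_le_mul_of_nonneg_right hm.le (abs_nonneg m)
  refine (hO.trans_isLittleO hsq).congr' ?_ (EventuallyEq.refl _ _)
  filter_upwards with m
  rw [h0]
  simp
  ring
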